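/- For every λ ∈ ℂ \ {0} and every n ≥ 1, the partial sum S_n(λ) = p_0 − λ + Σ_{k=1}^n b_k(λ) p_k admits the product representation S_n(λ) = (p_0 − λ) ∏_{k=1}^n (1 − c_k/λ), where c_k = p_k/q_k ∈ (0,1). -/

import Mathlib

open scoped BigOperators

noncomputable section

/-- Tail sum `q_l = Σ_{k ≥ l} p_k`. -/
def qtail (p : ℕ → ℝ) (l : ℕ) : ℝ := ∑' k, p (l + k)

/-- `b_k(λ) = ∏_{i=0}^{k-1} (λ q_i - p_i)/(λ q_{i+1})`. -/
def bcoef (p : ℕ → ℝ) (lam : ℂ) (k : ℕ) : ℂ :=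
  ∏ i ∈ Finset.range k, (lam * qtail p i - p i) / (lam * qtail p (i + 1))

/-!
Write `c_k = p_k / q_k` and `P_k = ∏_{i<k} (1 - c_i/λ)`. Since `λ q_i - p_i = λ q_i (1 - c_i/λ)`,
the product defining `b_k` telescopes to `b_k = P_k / q_k` (using `q_0 = 1`), so `b_k p_k = c_k P_k`.
As `c_0 = p_0`, both sides of the identity are `-λ` plus the two sides of the expansion
`P_{n+1} = 1 - Σ_{k ≤ n} (c_k/λ) P_k`. Finally `0 < p_k < p_k + q_{k+1} = q_k`.
-/

open Finset

lemma Finset.prod_range_one_sub {R : Type*} [CommRing R] (x : ℕ → R) (n : ℕ) :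
    ∏ k ∈ range n, (1 - x k) = 1 - ∑ k ∈ range n, x k * ∏ i ∈ range k, (1 - x i) := by
  induction n with
  | zero => simp
  | succ n ih => rw [prod_range_succ, sum_range_succ, ih]; ring

lemma Finset.prod_range_div_succ {K : Type*} [Field K] (g : ℕ → K) (hg : ∀ i, g i ≠ 0)
    (n : ℕ) : ∏ i ∈ range n, g i / g (i + 1) = g 0 / g n := by
  induction n with
  | zero => simp [hg 0]
  | succ n ih => rw [prod_range_succ, ih]; field_simp [hg n, hg (n + 1)]

section qtail

variable {p : ℕ → ℝ}

lemma summable_nat_add_left (hs : Summable p) (l : ℕ) : Summable fun k => p (l + k) := by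
  simpa only [add_comm] using (summable_nat_add_iff l).mpr hs

lemma qtail_pos (hp : ∀ k, 0 < p k) (hs : Summable p) (l : ℕ) : 0 < qtail p l :=
  (summable_nat_add_left hs l).tsum_pos (fun _ => (hp _).le) 0 (hp _)

lemma qtail_eq_add_qtail_succ (hs : Summable p) (l : ℕ) :
    qtail p l = p l + qtail p (l + 1) := by
  rw [qtail, (summable_nat_add_left hs l).tsum_eq_zero_add, qtail]
  simp only [add_zero, ← add_assoc, Nat.add_right_comm l _ 1]

lemma qtail_zero (hsum : HasSum p 1) : qtail p 0 = 1 := by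
  simpa [qtail] using hsum.tsum_eq

lemma div_qtail_mem_Ioo (hp : ∀ k, 0 < p k) (hs : Summable p) (k : ℕ) :
    p k / qtail p k ∈ Set.Ioo (0 : ℝ) 1 := by
  have hq := qtail_pos hp hs k
  refine ⟨div_pos (hp k) hq, (div_lt_one hq).mpr ?_⟩
  linarith [qtail_eq_add_qtail_succ hs k, qtail_pos hp hs (k + 1)]

lemma bcoef_eq_prod_div_qtail (hp : ∀ k, 0 < p k) (hsum : HasSum p 1) {lam : ℂ} (hlam : lam ≠ 0)
    (k : ℕ) :
    bcoef p lam k = (∏ i ∈ range k, (1 - ((p i / qtail p i : ℝ) : ℂ) / lam)) / qtail p k := by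
  have hq (i : ℕ) : (qtail p i : ℂ) ≠ 0 := by exact_mod_cast (qtail_pos hp hsum.summable i).ne'
  have hfactor (i : ℕ) : (lam * qtail p i - p i) / (lam * qtail p (i + 1)) =
      (1 - ((p i / qtail p i : ℝ) : ℂ) / lam) * (qtail p i / qtail p (i + 1)) := by
    push_cast
    field_simp [hq i, hq (i + 1)]
  rw [bcoef, prod_congr rfl fun i _ => hfactor i, prod_mul_distrib,
    prod_range_div_succ _ hq, qtail_zero hsum]
  simp [div_eq_mul_inv]

end qtail

theorem partial_sum_product_representation_general
    (p : ℕ → ℝ) (hp : ∀ k, 0 < p k) (hsum : HasSum p 1)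
    (lam : ℂ) (hlam : lam ≠ 0) (n : ℕ) :
    (p 0 : ℂ) - lam + ∑ k ∈ Finset.range n, bcoef p lam (k + 1) * (p (k + 1) : ℂ) =
        ((p 0 : ℂ) - lam) *
          ∏ k ∈ Finset.range n, (1 - ((p (k + 1) / qtail p (k + 1) : ℝ) : ℂ) / lam) ∧
      ∀ k : ℕ, 1 ≤ k → p k / qtail p k ∈ Set.Ioo (0 : ℝ) 1 := by
  refine ⟨?_, fun k _ => div_qtail_mem_Ioo hp hsum.summable k⟩
  set c : ℕ → ℂ := fun k => ((p k / qtail p k : ℝ) : ℂ)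
  have hq (k : ℕ) : (qtail p k : ℂ) ≠ 0 := by exact_mod_cast (qtail_pos hp hsum.summable k).ne'
  have hc0 : c 0 = p 0 := by simp [c, qtail_zero hsum]
  have hterm (k : ℕ) : bcoef p lam k * p k = lam * (c k / lam * ∏ i ∈ range k, (1 - c i / lam)) := by
    rw [bcoef_eq_prod_div_qtail hp hsum hlam]
    simp only [c]
    push_cast
    field_simp [hq k]
  have hlhs : (p 0 : ℂ) - lam + ∑ k ∈ range n, bcoef p lam (k + 1) * p (k + 1) =
      -lam + ∑ k ∈ range (n + 1), bcoef p lam k * p k := by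
    rw [sum_range_succ', show bcoef p lam 0 = 1 from prod_range_zero _]
    ring
  have hrhs : ((p 0 : ℂ) - lam) * ∏ k ∈ range n, (1 - c (k + 1) / lam) =
      -lam * ∏ k ∈ range (n + 1), (1 - c k / lam) := by
    rw [prod_range_succ', hc0]
    field_simp
    ring
  rw [hlhs, hrhs, prod_range_one_sub, sum_congr rfl fun k _ => hterm k, ← mul_sum]
  ring

/-- The partial sum `S_n(λ) = p_0 − λ + Σ_{k=1}^n b_k(λ) p_k` admits the product
representation `S_n(λ) = (p_0 − λ) ∏_{k=1}^n (1 − c_k/λ)` with `c_k = p_k/q_k ∈ (0,1)`. -/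
theorem partial_sum_product_representation
    (p : ℕ → ℝ) (hp : ∀ k, 0 < p k) (hsum : HasSum p 1)
    (lam : ℂ) (hlam : lam ≠ 0) (n : ℕ) (hn : 1 ≤ n) :
    (p 0 : ℂ) - lam + ∑ k ∈ Finset.range n, bcoef p lam (k + 1) * (p (k + 1) : ℂ) =
        ((p 0 : ℂ) - lam) *
          ∏ k ∈ Finset.range n, (1 - ((p (k + 1) / qtail p (k + 1) : ℝ) : ℂ) / lam) ∧
      ∀ k : ℕ, 1 ≤ k → p k / qtail p k ∈ Set.Ioo (0 : ℝ) 1 :=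
  partial_sum_product_representation_general p hp hsum lam hlam n
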